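/- Duality of weighted norms: for a full-rank density operator ρ on a finite-dimensional Hilbert space and any Hermitian operator f, ‖f‖_{L¹(ρ)} = sup{ ⟨g, f⟩_ρ : g Hermitian, ‖g‖_∞ ≤ 1 }, where ⟨g,f⟩_ρ = Tr[ρ^{1/2} g ρ^{1/2} f] and ‖f‖_{L¹(ρ)} = Tr[|ρ^{1/2} f ρ^{1/2}|]. -/

import Mathlib

open Matrix Kronecker MeasureTheory
open scoped BigOperators ComplexOrder

attribute [local instance] Matrix.frobeniusNormedAddCommGroup Matrix.frobeniusNormedSpace

variable {n : Type*} [Fintype n] [DecidableEq n]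

/-- Functional calculus for Hermitian matrices (with real functions). -/
noncomputable def funcCalc (f : ℝ → ℂ) (M : Matrix n n ℂ) : Matrix n n ℂ :=
  if h : M.IsHermitian then
    (h.eigenvectorUnitary : Matrix n n ℂ) * Matrix.diagonal (fun i => f (h.eigenvalues i)) *
      (star h.eigenvectorUnitary : Matrix n n ℂ)
  else 0

/-- Matrix logarithm of a Hermitian matrix. -/
noncomputable def mlog (M : Matrix n n ℂ) : Matrix n n ℂ :=
  funcCalc (fun x => (Real.log x : ℂ)) M

/-- Matrix exponential of a Hermitian matrix. -/
noncomputable def mexp (M : Matrix n n ℂ) : Matrix n n ℂ :=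
  funcCalc (fun x => (Real.exp x : ℂ)) M

/-- Inverse square root `M^{-1/2}` of a positive definite matrix. -/
noncomputable def invSqrt (M : Matrix n n ℂ) : Matrix n n ℂ :=
  funcCalc (fun x => ((x ^ (-(1/2) : ℝ) : ℝ) : ℂ)) M

/-- Complex power `M^z` of a Hermitian (positive definite) matrix. -/
noncomputable def cpow (M : Matrix n n ℂ) (z : ℂ) : Matrix n n ℂ :=
  if h : M.IsHermitian then
    (h.eigenvectorUnitary : Matrix n n ℂ) *
      Matrix.diagonal (fun i => (h.eigenvalues i : ℂ) ^ z) *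
      (star h.eigenvectorUnitary : Matrix n n ℂ)
  else 0

/-- Quantum relative entropy `D(ρ‖σ) = Tr[ρ(log ρ - log σ)]` of density matrices. -/
noncomputable def relEnt (ρ σ : Matrix n n ℂ) : ℝ :=
  ((ρ * (mlog ρ - mlog σ)).trace).re

/-- Normalized relative entropy for not-necessarily-normalized positive operators. -/
noncomputable def relEntGen (f g : Matrix n n ℂ) : ℝ :=
  ((f.trace).re)⁻¹ * ((f * (mlog f - mlog g)).trace).re

/-- A density operator: positive semidefinite with unit trace. -/
def IsDensity (M : Matrix n n ℂ) : Prop := M.PosSemidef ∧ M.trace = 1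

/-- Support inclusion `supp ρ ⊆ supp σ`, phrased as kernel inclusion. -/
def SuppLE (ρ σ : Matrix n n ℂ) : Prop := ∀ v, σ *ᵥ v = 0 → ρ *ᵥ v = 0

/-- The positive semidefinite square root, as `Matrix.PosSemidef.sqrt` was defined in Mathlib
(Dec 2024); it has since been removed from Mathlib. -/
noncomputable def Matrix.PosSemidef.sqrt {𝕜 : Type*} [RCLike 𝕜] {A : Matrix n n 𝕜}
    (hA : A.PosSemidef) : Matrix n n 𝕜 :=
  hA.1.eigenvectorUnitary.1 * Matrix.diagonal ((↑) ∘ (√·) ∘ hA.1.eigenvalues) *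
    (star hA.1.eigenvectorUnitary : Matrix n n 𝕜)

/-- Trace norm `‖X‖₁ = Tr √(XᴴX)`. -/
noncomputable def trNorm (X : Matrix n n ℂ) : ℝ :=
  (((Matrix.posSemidef_conjTranspose_mul_self X).sqrt).trace).re

/-- Operator norm `‖M‖∞`. -/
noncomputable def opNorm (M : Matrix n n ℂ) : ℝ :=
  ‖(Matrix.toEuclideanCLM (𝕜 := ℂ) M : EuclideanSpace ℂ n →L[ℂ] EuclideanSpace ℂ n)‖

/-- The superoperator `T_g(f) = ∫₀^∞ (g+t)⁻¹ f (g+t)⁻¹ dt`. -/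
noncomputable def Tcal (g f : Matrix n n ℂ) : Matrix n n ℂ :=
  ∫ t in Set.Ioi (0 : ℝ), (g + (t : ℂ) • 1)⁻¹ * f * (g + (t : ℂ) • 1)⁻¹

/-- The probability density `β₀(t) = (π/2)(cosh(π t) + 1)⁻¹`. -/
noncomputable def beta0 (t : ℝ) : ℝ := (Real.pi / 2) * (Real.cosh (Real.pi * t) + 1)⁻¹

variable {A B : Type*} [Fintype A] [DecidableEq A] [Fintype B] [DecidableEq B]

/-- Partial trace over `B`. -/
noncomputable def ptraceB (M : Matrix (A × B) (A × B) ℂ) : Matrix A A ℂ :=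
  Matrix.of fun a a' => ∑ b, M (a, b) (a', b)

/-- Partial trace over `A`. -/
noncomputable def ptraceA (M : Matrix (A × B) (A × B) ℂ) : Matrix B B ℂ :=
  Matrix.of fun b b' => ∑ a, M (a, b) (a, b')

/-! Put M = ρ^{1/2} f ρ^{1/2}, a Hermitian matrix; by cyclicity of the trace the pairing
Tr[ρ^{1/2} g ρ^{1/2} f] equals Tr[g M]. If M = ∑ λᵢ uᵢuᵢ* is a spectral decomposition, then
Tr[g M] = ∑ λᵢ ⟨uᵢ, g uᵢ⟩ with |⟨uᵢ, g uᵢ⟩| ≤ ‖g‖_∞, so every value is at most ∑ |λᵢ| = Tr|M|.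
The bound is attained by the Hermitian unitary g = sign(M), for which g M = |M|. -/

open scoped MatrixOrder

lemma Matrix.PosSemidef.sqrt_eq_cfcSqrt {M : Matrix n n ℂ} (hM : M.PosSemidef) :
    hM.sqrt = CFC.sqrt M := by
  rw [CFC.sqrt_eq_cfc, cfc_nnreal_eq_real _ M hM.nonneg, hM.1.cfc_eq, Matrix.IsHermitian.cfc,
    Unitary.conjStarAlgAut_apply]
  simp only [Matrix.PosSemidef.sqrt, Function.comp_def, Real.sqrt]

lemma Matrix.PosSemidef.isHermitian_sqrt {M : Matrix n n ℂ} (hM : M.PosSemidef) :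
    hM.sqrt.IsHermitian := by
  rw [hM.sqrt_eq_cfcSqrt]
  exact (CFC.sqrt_nonneg M).isSelfAdjoint

lemma trNorm_eq_re_trace_cfcAbs (M : Matrix n n ℂ) : trNorm M = (CFC.abs M).trace.re := by
  rw [trNorm, Matrix.PosSemidef.sqrt_eq_cfcSqrt, CFC.abs, Matrix.star_eq_conjTranspose]

lemma Matrix.IsHermitian.trace_cfc {M : Matrix n n ℂ} (hM : M.IsHermitian) (f : ℝ → ℝ) :
    (cfc f M).trace = ∑ i, (f (hM.eigenvalues i) : ℂ) := by
  rw [hM.cfc_eq, Matrix.IsHermitian.cfc, Unitary.conjStarAlgAut_apply, Matrix.trace_mul_cycle,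
    Unitary.coe_star_mul_self, one_mul, Matrix.trace_diagonal]
  rfl

lemma Matrix.IsHermitian.trNorm_eq_sum_abs_eigenvalues {M : Matrix n n ℂ} (hM : M.IsHermitian) :
    trNorm M = ∑ i, |hM.eigenvalues i| := by
  rw [trNorm_eq_re_trace_cfcAbs, CFC.abs_eq_cfc_norm M hM.isSelfAdjoint, hM.trace_cfc,
    Complex.re_sum]
  simp

lemma opNorm_le_one_of_mem_unitary {U : Matrix n n ℂ} (hU : U ∈ unitary (Matrix n n ℂ)) :
    opNorm U ≤ 1 := by
  cases isEmpty_or_nonempty n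
  · simp [opNorm]
  · exact (CStarRing.norm_of_mem_unitary
      (Unitary.map_mem (toEuclideanCLM (𝕜 := ℂ) (n := n)) hU)).le

lemma opNorm_star_mul_mul_of_mem_unitary {U : Matrix n n ℂ} (hU : U ∈ unitary (Matrix n n ℂ))
    (g : Matrix n n ℂ) : opNorm (star U * g * U) = opNorm g := by
  have hU' := Unitary.map_mem (toEuclideanCLM (𝕜 := ℂ) (n := n)) hU
  rw [opNorm, map_mul, map_mul, map_star, CStarRing.norm_mul_mem_unitary _ hU',
    CStarRing.norm_mem_unitary_mul _ (Unitary.star_mem hU'), opNorm]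

lemma norm_apply_self_le_opNorm (g : Matrix n n ℂ) (i : n) : ‖g i i‖ ≤ opNorm g := by
  set e : EuclideanSpace ℂ n := EuclideanSpace.single i 1
  have he : ‖e‖ = 1 := by simp [e]
  have hentry : g i i = inner ℂ e (toEuclideanCLM (𝕜 := ℂ) g e) := by
    simp [e, EuclideanSpace.inner_single_left, ofLp_toEuclideanCLM, mulVec_single]
  calc ‖g i i‖ ≤ ‖e‖ * ‖toEuclideanCLM (𝕜 := ℂ) g e‖ := hentry ▸ norm_inner_le_norm _ _
    _ ≤ ‖e‖ * (opNorm g * ‖e‖) := by gcongr; exact (toEuclideanCLM (𝕜 := ℂ) g).le_opNorm e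
    _ = opNorm g := by rw [he, one_mul, mul_one]

namespace Matrix.IsHermitian

section

variable {M : Matrix n n ℂ} (hM : M.IsHermitian)

lemma trace_mul_eq_sum_diag_mul_eigenvalues (g : Matrix n n ℂ) :
    (g * M).trace = ∑ i, (star (hM.eigenvectorUnitary : Matrix n n ℂ) * g *
      (hM.eigenvectorUnitary : Matrix n n ℂ)) i i * hM.eigenvalues i := by
  conv_lhs => rw [hM.spectral_theorem, Unitary.conjStarAlgAut_apply, ← mul_assoc,
    Matrix.trace_mul_cycle, ← mul_assoc]
  simp [Matrix.trace, Matrix.mul_diagonal]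

lemma re_trace_mul_le_sum_abs_eigenvalues {g : Matrix n n ℂ} (hg : opNorm g ≤ 1) :
    (g * M).trace.re ≤ ∑ i, |hM.eigenvalues i| := by
  rw [hM.trace_mul_eq_sum_diag_mul_eigenvalues, Complex.re_sum]
  refine Finset.sum_le_sum fun i _ => ?_
  set U : Matrix n n ℂ := (hM.eigenvectorUnitary : Matrix n n ℂ)
  have hdiag : ‖(star U * g * U) i i‖ ≤ 1 := by
    calc _ ≤ opNorm (star U * g * U) := norm_apply_self_le_opNorm _ i
      _ = opNorm g := opNorm_star_mul_mul_of_mem_unitary hM.eigenvectorUnitary.2 g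
      _ ≤ 1 := hg
  calc ((star U * g * U) i i * hM.eigenvalues i).re
      ≤ ‖(star U * g * U) i i * hM.eigenvalues i‖ := Complex.re_le_norm _
    _ ≤ |hM.eigenvalues i| := by
      rw [norm_mul, Complex.norm_real, Real.norm_eq_abs]
      exact mul_le_of_le_one_left (abs_nonneg _) hdiag

lemma exists_re_trace_mul_eq_sum_abs_eigenvalues :
    ∃ g : Matrix n n ℂ, g.IsHermitian ∧ opNorm g ≤ 1 ∧
      (g * M).trace.re = ∑ i, |hM.eigenvalues i| := by
  set s : ℝ → ℝ := fun x => if 0 ≤ x then 1 else -1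
  have hs_sq : ∀ x, s x * s x = 1 := fun x => by by_cases h : 0 ≤ x <;> simp [s, h]
  have hs_mul : ∀ x, s x * x = |x| := fun x => by
    by_cases h : 0 ≤ x
    · simp [s, h, abs_of_nonneg h]
    · simp [s, h, abs_of_neg (not_le.mp h)]
  have hsa : IsSelfAdjoint (cfc s M) := IsSelfAdjoint.cfc
  have hcont (f : ℝ → ℝ) : ContinuousOn f (spectrum ℝ M) := M.finite_real_spectrum.continuousOn f
  have hsq : cfc s M * cfc s M = 1 := by
    rw [← cfc_mul s s M (hcont s) (hcont s), funext hs_sq, cfc_const_one ℝ M]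
  have hunitary : cfc s M ∈ unitary (Matrix n n ℂ) :=
    Unitary.mem_iff.mpr ⟨by rw [hsa.star_eq, hsq], by rw [hsa.star_eq, hsq]⟩
  have habs : cfc s M * M = cfc (fun x : ℝ => |x|) M := by
    calc cfc s M * M = cfc s M * cfc (fun x => x) M := by rw [cfc_id' ℝ M]
      _ = cfc (fun x => s x * x) M := (cfc_mul s _ M (hcont _) (hcont _)).symm
      _ = cfc (fun x : ℝ => |x|) M := by simp_rw [hs_mul]
  refine ⟨cfc s M, hsa, opNorm_le_one_of_mem_unitary hunitary, ?_⟩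
  rw [habs, hM.trace_cfc, Complex.re_sum]
  simp

end

lemma isGreatest_re_trace_mul_trNorm {M : Matrix n n ℂ} (hM : M.IsHermitian) :
    IsGreatest {x : ℝ | ∃ g : Matrix n n ℂ, g.IsHermitian ∧ opNorm g ≤ 1 ∧ x = (g * M).trace.re}
      (trNorm M) := by
  rw [hM.trNorm_eq_sum_abs_eigenvalues]
  obtain ⟨g, hg, hg_norm, hg_trace⟩ := hM.exists_re_trace_mul_eq_sum_abs_eigenvalues
  refine ⟨⟨g, hg, hg_norm, hg_trace.symm⟩, ?_⟩
  rintro x ⟨g, -, hg_norm, rfl⟩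
  exact hM.re_trace_mul_le_sum_abs_eigenvalues hg_norm

end Matrix.IsHermitian

theorem weighted_L1_duality_general
    (ρ : Matrix n n ℂ) (hρ : IsDensity ρ)
    (f : Matrix n n ℂ) (hf : f.IsHermitian) :
    trNorm (hρ.1.sqrt * f * hρ.1.sqrt) =
      sSup {x : ℝ | ∃ g : Matrix n n ℂ, g.IsHermitian ∧ opNorm g ≤ 1 ∧
        x = ((hρ.1.sqrt * g * hρ.1.sqrt * f).trace).re} := by
  set S := hρ.1.sqrt
  have hS : S.IsHermitian := hρ.1.isHermitian_sqrt
  have hSfS : (S * f * S).IsHermitian := by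
    simpa [hS.eq] using Matrix.isHermitian_mul_mul_conjTranspose S hf
  have htrace (g : Matrix n n ℂ) : (S * g * S * f).trace = (g * (S * f * S)).trace := by
    rw [Matrix.trace_mul_comm g, mul_assoc (S * g), Matrix.trace_mul_comm (S * g), ← mul_assoc]
  simp_rw [htrace]
  exact hSfS.isGreatest_re_trace_mul_trNorm.csSup_eq.symm

theorem weighted_L1_duality
    (ρ : Matrix n n ℂ) (hρ : IsDensity ρ) (hpd : ρ.PosDef)
    (f : Matrix n n ℂ) (hf : f.IsHermitian) :
    trNorm (hρ.1.sqrt * f * hρ.1.sqrt) =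
      sSup {x : ℝ | ∃ g : Matrix n n ℂ, g.IsHermitian ∧ opNorm g ≤ 1 ∧
        x = ((hρ.1.sqrt * g * hρ.1.sqrt * f).trace).re} :=
  weighted_L1_duality_general ρ hρ f hf
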